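/- arXiv:1712.06398 — 5 statements merged into one kernel-verified Lean document; each statement's English description precedes it below -/
import Mathlib

section
/- Let V be a finite-dimensional real vector space with dim V = n ≥ 1 and let Q be an anisotropic quadratic form on V (Q(x) = 0 implies x = 0). Let 0 ≤ r ≤ n with r ≡ n (mod 2). Then every product of r vectors ι(x₁)⋯ι(x_r) lies in the real linear span of the set of products of exactly n vectors {ι(y₁)⋯ι(y_n) : y₁,…,y_n ∈ V}. -/
/-!
Products of `r` vectors span the submodule `(range ι)^r`. If `Q x₀` is a unit, then
`z = (Q x₀)⁻¹ • ι x₀ * ι x₀ * z`, so `(range ι)^r ≤ (range ι)^(r + 2)`; iterating this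
`(n - r) / 2` times gives the claim, with `x₀` any nonzero vector of the anisotropic space.
-/

open CliffordAlgebra

namespace CliffordAlgebra

variable {R M : Type*} [CommRing R] [AddCommGroup M] [Module R M] (Q : QuadraticForm R M)

theorem span_prod_ofFn_ι_eq_range_pow (n : ℕ) :
    Submodule.span R {z : CliffordAlgebra Q | ∃ y : Fin n → M,
      z = (List.ofFn fun i => ι Q (y i)).prod} = LinearMap.range (ι Q) ^ n := by
  rw [Submodule.pow_eq_span_pow_set]
  congr 1
  ext z
  simp only [Set.mem_ofPred_eq, Set.mem_pow, LinearMap.coe_range]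
  constructor
  · rintro ⟨y, rfl⟩
    exact ⟨fun i => ⟨ι Q (y i), y i, rfl⟩, rfl⟩
  · rintro ⟨f, rfl⟩
    choose y hy using fun i => (f i).2
    exact ⟨y, by simp only [hy]⟩

theorem range_ι_pow_le_pow_add_two {x₀ : M} (h : IsUnit (Q x₀)) (r : ℕ) :
    LinearMap.range (ι Q) ^ r ≤ LinearMap.range (ι Q) ^ (r + 2) := by
  intro z hz
  have hsq : z = (↑h.unit⁻¹ : R) • (ι Q x₀ * ι Q x₀ * z) := by
    rw [ι_sq_scalar, ← Algebra.smul_def, smul_smul, h.val_inv_mul, one_smul]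
  rw [hsq, add_comm, pow_add]
  refine Submodule.smul_mem _ _ (Submodule.mul_mem_mul ?_ hz)
  rw [pow_two]
  exact Submodule.mul_mem_mul ⟨x₀, rfl⟩ ⟨x₀, rfl⟩

theorem range_ι_pow_le_pow_add_two_mul {x₀ : M} (h : IsUnit (Q x₀)) (r k : ℕ) :
    LinearMap.range (ι Q) ^ r ≤ LinearMap.range (ι Q) ^ (r + 2 * k) := by
  induction k with
  | zero => rfl
  | succ k ih => exact ih.trans (range_ι_pow_le_pow_add_two Q h _)

end CliffordAlgebra

theorem clifford_product_mem_span_products_of_dim_parity_general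
    (V : Type*) [AddCommGroup V] [Module ℝ V]
    (n : ℕ) (hn : Module.finrank ℝ V = n) (hn1 : 1 ≤ n)
    (Q : QuadraticForm ℝ V) (hQ : ∀ x : V, Q x = 0 → x = 0)
    (r : ℕ) (hr : r ≤ n) (hparity : r % 2 = n % 2) (x : Fin r → V) :
    (List.ofFn fun i => ι Q (x i)).prod ∈
      Submodule.span ℝ
        {z : CliffordAlgebra Q | ∃ y : Fin n → V,
          z = (List.ofFn fun i => ι Q (y i)).prod} := by
  have : Nontrivial V := Module.nontrivial_of_finrank_pos (R := ℝ) (by omega)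
  obtain ⟨x₀, hx₀⟩ := exists_ne (0 : V)
  have hQx₀ : IsUnit (Q x₀) := isUnit_iff_ne_zero.mpr (mt (hQ x₀) hx₀)
  obtain ⟨k, rfl⟩ : ∃ k, n = r + 2 * k := ⟨(n - r) / 2, by omega⟩
  rw [span_prod_ofFn_ι_eq_range_pow]
  apply range_ι_pow_le_pow_add_two_mul Q hQx₀ r k
  rw [← span_prod_ofFn_ι_eq_range_pow]
  exact Submodule.subset_span ⟨x, rfl⟩

/-- Let `V` be a finite-dimensional real vector space of dimension `n ≥ 1` with
an anisotropic quadratic form `Q`, and let `0 ≤ r ≤ n` with `r ≡ n (mod 2)`. Then every product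
of `r` vectors `ι x₁ ⋯ ι x_r` lies in the real span of the products of exactly `n` vectors. -/
theorem clifford_product_mem_span_products_of_dim_parity
    (V : Type*) [AddCommGroup V] [Module ℝ V] [FiniteDimensional ℝ V]
    (n : ℕ) (hn : Module.finrank ℝ V = n) (hn1 : 1 ≤ n)
    (Q : QuadraticForm ℝ V) (hQ : ∀ x : V, Q x = 0 → x = 0)
    (r : ℕ) (hr : r ≤ n) (hparity : r % 2 = n % 2) (x : Fin r → V) :
    (List.ofFn fun i => ι Q (x i)).prod ∈
      Submodule.span ℝ
        {z : CliffordAlgebra Q | ∃ y : Fin n → V,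
          z = (List.ofFn fun i => ι Q (y i)).prod} :=
  clifford_product_mem_span_products_of_dim_parity_general V n hn hn1 Q hQ r hr hparity x
end

section
/- Let V be a finite-dimensional real vector space with dim V = n ≥ 1 and let Q be an anisotropic quadratic form on V (Q(x) = 0 implies x = 0). Then CliffordAlgebra Q is spanned as a real vector space by the set of products of exactly n vectors together with the set of products of exactly n−1 vectors, i.e., by {ι(x₁)⋯ι(x_r) : x_i ∈ V, r ∈ {n−1, n}}. -/
/-!
Let `F k = (range ι) ^ k` be the span of the products of `k` vectors. Since
`ι a * ι b + ι b * ι a = polar Q a b`, a product of `k` vectors with a repeated factor lies in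
`F (k - 2)`, so modulo `F (k - 2)` the product map is alternating and kills linearly dependent
families; for `k = n + 1` this gives `F (n + 1) ≤ F (n - 1)`. Anisotropy provides `v` with
`ι v * ι v = Q v ≠ 0`, so `1 ∈ F 2` and `F k ≤ F (k + 2)`. Hence every `F k` lies in
`F (n - 1) ⊔ F n`, and the `F k` together span the Clifford algebra.
-/

open CliffordAlgebra

namespace Submodule

variable {R A : Type*} [CommSemiring R] [Semiring A] [Algebra R A] (N : Submodule R A)

theorem pow_le_pow_add_two_mul (h1 : (1 : A) ∈ N ^ 2) (i k : ℕ) : N ^ i ≤ N ^ (i + 2 * k) := by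
  rw [pow_add, pow_mul]
  exact le_mul_of_one_le_right' (one_le_pow_of_one_le' (one_le.mpr h1) k)

theorem pow_add_le_sup_of_pow_add_two_le {m : ℕ} (h : N ^ (m + 2) ≤ N ^ m) :
    ∀ j, N ^ (m + j) ≤ N ^ m ⊔ N ^ (m + 1)
  | 0 => le_sup_left
  | 1 => le_sup_right
  | j + 2 => calc
      N ^ (m + (j + 2)) = N ^ (m + 2) * N ^ j := by rw [← pow_add]; ring_nf
      _ ≤ N ^ m * N ^ j := mul_le_mul_left h _
      _ = N ^ (m + j) := (pow_add _ _ _).symm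
      _ ≤ N ^ m ⊔ N ^ (m + 1) := pow_add_le_sup_of_pow_add_two_le h j

theorem pow_le_sup_of_pow_add_two_le (h1 : (1 : A) ∈ N ^ 2) {m : ℕ}
    (h : N ^ (m + 2) ≤ N ^ m) (i : ℕ) : N ^ i ≤ N ^ m ⊔ N ^ (m + 1) :=
  calc N ^ i ≤ N ^ (i + 2 * m) := pow_le_pow_add_two_mul N h1 i m
    _ = N ^ (m + (i + m)) := by ring_nf
    _ ≤ N ^ m ⊔ N ^ (m + 1) := pow_add_le_sup_of_pow_add_two_le N h _

end Submodule

namespace CliffordAlgebra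

section CommRing

variable {R M : Type*} [CommRing R] [AddCommGroup M] [Module R M] (Q : QuadraticForm R M)

def ιProd (r : ℕ) : MultilinearMap R (fun _ : Fin r => M) (CliffordAlgebra Q) :=
  (MultilinearMap.mkPiAlgebraFin R r _).compLinearMap fun _ => ι Q

theorem ιProd_apply {r : ℕ} (x : Fin r → M) :
    ιProd Q r x = (List.ofFn fun i => ι Q (x i)).prod := by
  simp [ιProd, MultilinearMap.mkPiAlgebraFin_apply]

theorem ιProd_mem_pow {r : ℕ} (x : Fin r → M) : ιProd Q r x ∈ LinearMap.range (ι Q) ^ r := by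
  rw [Submodule.pow_eq_span_pow_set, ιProd_apply]
  exact Submodule.subset_span
    (Set.mem_pow.mpr ⟨fun i => ⟨_, LinearMap.mem_range_self _ (x i)⟩, rfl⟩)

theorem span_range_ιProd (r : ℕ) :
    Submodule.span R (Set.range (ιProd Q r)) = LinearMap.range (ι Q) ^ r := by
  refine le_antisymm (Submodule.span_le.mpr (Set.range_subset_iff.mpr (ιProd_mem_pow Q))) ?_
  rw [Submodule.pow_eq_span_pow_set, Submodule.span_le]
  intro z hz
  obtain ⟨f, rfl⟩ := Set.mem_pow.mp hz
  choose x hx using fun i => (f i).2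
  exact Submodule.subset_span ⟨x, by simp [ιProd_apply, hx]⟩

theorem ιProd_succ {r : ℕ} (x : Fin (r + 1) → M) :
    ιProd Q (r + 1) x = ι Q (x 0) * ιProd Q r (Fin.tail x) := by
  simp [ιProd_apply, List.ofFn_succ, Fin.tail]

theorem ι_mul_ιProd_mem_pow {r : ℕ} (x : Fin (r + 1) → M) (i : Fin (r + 1)) :
    ι Q (x i) * ιProd Q (r + 1) x ∈ LinearMap.range (ι Q) ^ r := by
  rw [ιProd_succ, ← mul_assoc]
  cases i using Fin.cases with
  | zero =>
    rw [ι_sq_scalar, ← Algebra.smul_def]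
    exact Submodule.smul_mem _ _ (ιProd_mem_pow Q _)
  | succ j =>
    cases r with
    | zero => exact j.elim0
    | succ r =>
      rw [ι_mul_ι_comm, sub_mul, ← Algebra.smul_def, mul_assoc]
      refine Submodule.sub_mem _ (Submodule.smul_mem _ _ (ιProd_mem_pow Q _)) ?_
      rw [pow_succ']
      exact Submodule.mul_mem_mul (LinearMap.mem_range_self _ _)
        (ι_mul_ιProd_mem_pow (Fin.tail x) j)

theorem ιProd_mem_pow_of_eq {r : ℕ} (x : Fin (r + 2) → M) {i j : Fin (r + 2)} (hij : i ≠ j)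
    (hx : x i = x j) : ιProd Q (r + 2) x ∈ LinearMap.range (ι Q) ^ r := by
  rw [ιProd_succ]
  cases i using Fin.cases with
  | zero =>
    cases j using Fin.cases with
    | zero => exact absurd rfl hij
    | succ j => exact hx ▸ ι_mul_ιProd_mem_pow Q (Fin.tail x) j
  | succ i =>
    cases j using Fin.cases with
    | zero => exact hx.symm ▸ ι_mul_ιProd_mem_pow Q (Fin.tail x) i
    | succ j =>
      cases r with
      | zero =>
        exact absurd (Fin.subsingleton_one.elim i j) ((Fin.succ_injective _).ne_iff.mp hij)
      | succ r =>
        rw [pow_succ']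
        exact Submodule.mul_mem_mul (LinearMap.mem_range_self _ _)
          (ιProd_mem_pow_of_eq (Fin.tail x) ((Fin.succ_injective _).ne_iff.mp hij) hx)

theorem one_mem_ι_range_sq_of_isUnit {v : M} (hv : IsUnit (Q v)) :
    (1 : CliffordAlgebra Q) ∈ LinearMap.range (ι Q) ^ 2 := by
  obtain ⟨u, hu⟩ := hv
  have hone : (1 : CliffordAlgebra Q) = (↑u⁻¹ : R) • (ι Q v * ι Q v) := by
    rw [ι_sq_scalar, ← hu, Algebra.smul_def, ← map_mul, Units.inv_mul, map_one]
  rw [hone, sq]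
  exact Submodule.smul_mem _ _
    (Submodule.mul_mem_mul (LinearMap.mem_range_self _ v) (LinearMap.mem_range_self _ v))

end CommRing

section Field

variable {K M : Type*} [Field K] [AddCommGroup M] [Module K M] [Module.Finite K M]
  (Q : QuadraticForm K M)

theorem ι_range_pow_add_two_le {r : ℕ} (h : Module.finrank K M < r + 2) :
    LinearMap.range (ι Q) ^ (r + 2) ≤ LinearMap.range (ι Q) ^ r := by
  let N := LinearMap.range (ι Q) ^ r
  let f : M [⋀^Fin (r + 2)]→ₗ[K] (CliffordAlgebra Q ⧸ N) :=
    { N.mkQ.compMultilinearMap (ιProd Q (r + 2)) with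
      map_eq_zero_of_eq' := fun x _ _ hx hij =>
        (Submodule.Quotient.mk_eq_zero N).mpr (ιProd_mem_pow_of_eq Q x hij hx) }
  rw [← span_range_ιProd, Submodule.span_le]
  rintro _ ⟨x, rfl⟩
  have hdep : ¬LinearIndependent K x := fun hx => by
    simpa using hx.fintype_card_le_finrank.trans_lt h
  exact (Submodule.Quotient.mk_eq_zero N).mp (f.map_linearDependent x hdep)

end Field

end CliffordAlgebra

/-- Let `V` be a finite-dimensional real vector space of dimension `n ≥ 1` with
an anisotropic quadratic form `Q`. Then the Clifford algebra of `Q` is spanned, as a real vector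
space, by the products of exactly `n` vectors together with the products of exactly `n - 1`
vectors. -/
theorem cliffordAlgebra_span_products_top_degrees
    (V : Type*) [AddCommGroup V] [Module ℝ V] [FiniteDimensional ℝ V]
    (n : ℕ) (hn : Module.finrank ℝ V = n) (hn1 : 1 ≤ n)
    (Q : QuadraticForm ℝ V) (hQ : ∀ x : V, Q x = 0 → x = 0) :
    Submodule.span ℝ
      {z : CliffordAlgebra Q | ∃ r : ℕ, (r = n - 1 ∨ r = n) ∧ ∃ x : Fin r → V,
        z = (List.ofFn fun i => ι Q (x i)).prod} = ⊤ := by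
  obtain ⟨m, rfl⟩ : ∃ m, n = m + 1 := ⟨n - 1, by omega⟩
  have : Nontrivial V := Module.nontrivial_of_finrank_pos (R := ℝ) (by omega)
  obtain ⟨v, hv⟩ := exists_ne (0 : V)
  have hone := one_mem_ι_range_sq_of_isUnit Q (isUnit_iff_ne_zero.mpr (mt (hQ v) hv))
  have hdesc := ι_range_pow_add_two_le Q (r := m) (by omega)
  rw [eq_top_iff, ← iSup_ι_range_eq_top]
  refine iSup_le fun i => (Submodule.pow_le_sup_of_pow_add_two_le _ hone hdesc i).trans
    (sup_le ?_ ?_)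
  all_goals
    rw [← span_range_ιProd]
    refine Submodule.span_mono ?_
    rintro _ ⟨x, rfl⟩
    exact ⟨_, by omega, x, ιProd_apply Q x⟩
end

section
/- Let V be a finite-dimensional real vector space with dim V = n ≥ 1, let Q be an anisotropic quadratic form on V, let Δ be a module over CliffordAlgebra Q that is simple (its only CliffordAlgebra Q-submodules are 0 and Δ), and let ψ ∈ Δ be nonzero. Then Δ is spanned as a real vector space by the elements (ι(x₁)⋯ι(x_r)) • ψ with x₁,…,x_r ∈ V and r ∈ {n−1, n}. -/
/-! The products of `r` vectors span `range (ι Q) ^ r`. For an anisotropic `e`, `ι e * ι e = Q e`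
is a nonzero scalar, so these subspaces grow with `r` in steps of two. Conversely, for `r > n` the
`r` vectors are linearly dependent; modulo degree `r - 2` the product is alternating, because
`ι y * P * ι y` has the degree of `P` by the relation `ι y * ι b = polar Q y b - ι b * ι y`, so
the product drops to degree `r - 2`. Hence the products of `n - 1` or `n` vectors span the whole
Clifford algebra, and a simple module is generated by any `ψ ≠ 0`. -/

open CliffordAlgebra

namespace CliffordAlgebra

section CommRing

variable {R V : Type*} [CommRing R] [AddCommGroup V] [Module R V] {Q : QuadraticForm R V}

theorem span_range_prod_ofFn_ι (r : ℕ) :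
    Submodule.span R (Set.range fun x : Fin r → V => (List.ofFn fun i => ι Q (x i)).prod) =
      LinearMap.range (ι Q) ^ r := by
  refine le_antisymm (Submodule.span_le.2 ?_) ?_
  · rintro _ ⟨x, rfl⟩
    exact Submodule.pow_subset_pow _ (Set.mem_pow.2 ⟨fun i => ⟨ι Q (x i), x i, rfl⟩, rfl⟩)
  · rw [Submodule.pow_eq_span_pow_set, Submodule.span_le]
    intro a ha
    obtain ⟨f, rfl⟩ := Set.mem_pow.1 ha
    choose x hx using fun i => (f i).2
    exact Submodule.subset_span ⟨x, by simp only [hx]⟩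

theorem ι_mul_mul_ι_mem_pow (y : V) {d : ℕ} {P : CliffordAlgebra Q}
    (hP : P ∈ LinearMap.range (ι Q) ^ d) :
    ι Q y * P * ι Q y ∈ LinearMap.range (ι Q) ^ d := by
  induction hP using Submodule.pow_induction_on_left' with
  | algebraMap c =>
    rw [← Algebra.commutes, mul_assoc, ι_sq_scalar, ← map_mul]
    exact Submodule.algebraMap_mem _
  | add P P' d _ _ hP hP' => simpa only [mul_add, add_mul] using add_mem hP hP'
  | mem_mul a ha d P hP ih =>
    obtain ⟨b, rfl⟩ := ha
    have hPy : P * ι Q y ∈ LinearMap.range (ι Q) ^ (d + 1) := by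
      rw [pow_succ]; exact Submodule.mul_mem_mul hP (LinearMap.mem_range_self _ _)
    have hbP : ι Q b * (ι Q y * P * ι Q y) ∈ LinearMap.range (ι Q) ^ (d + 1) := by
      rw [pow_succ']; exact Submodule.mul_mem_mul (LinearMap.mem_range_self _ _) ih
    rw [← mul_assoc, ι_mul_ι_comm, sub_mul, sub_mul, Algebra.algebraMap_eq_smul_one, smul_mul_assoc,
      one_mul, smul_mul_assoc, mul_assoc (ι Q b), mul_assoc (ι Q b)]
    exact sub_mem (Submodule.smul_mem _ _ hPy) hbP

theorem prod_map_ι_mem_pow (l : List V) :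
    (l.map (ι Q)).prod ∈ LinearMap.range (ι Q) ^ l.length := by
  induction l with
  | nil => simpa using Submodule.one_le.1 (le_refl (1 : Submodule R (CliffordAlgebra Q)))
  | cons a l ih =>
    rw [List.map_cons, List.prod_cons, List.length_cons, pow_succ']
    exact Submodule.mul_mem_mul (LinearMap.mem_range_self _ _) ih

theorem ι_mul_mul_prod_mem_pow_of_mem {y : V} {l : List V} (hy : y ∈ l) {d : ℕ}
    {P : CliffordAlgebra Q} (hP : P ∈ LinearMap.range (ι Q) ^ d) :
    ι Q y * P * (l.map (ι Q)).prod ∈ LinearMap.range (ι Q) ^ (d + l.length - 1) := by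
  induction l generalizing d P with
  | nil => simp at hy
  | cons b l ih =>
    rw [List.map_cons, List.prod_cons, ← mul_assoc]
    obtain rfl | hy := List.mem_cons.1 hy
    · rw [List.length_cons, show d + (l.length + 1) - 1 = d + l.length by omega, pow_add]
      exact Submodule.mul_mem_mul (ι_mul_mul_ι_mem_pow y hP) (prod_map_ι_mem_pow l)
    · have hPb : P * ι Q b ∈ LinearMap.range (ι Q) ^ (d + 1) := by
        rw [pow_succ]; exact Submodule.mul_mem_mul hP (LinearMap.mem_range_self _ _)
      rw [List.length_cons, show d + (l.length + 1) = d + 1 + l.length by omega, mul_assoc _ P]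
      exact ih hy hPb

theorem prod_map_ι_mem_pow_of_not_nodup {l : List V} (hl : ¬ l.Nodup) :
    (l.map (ι Q)).prod ∈ LinearMap.range (ι Q) ^ (l.length - 2) := by
  induction l with
  | nil => simp at hl
  | cons a l ih =>
    rw [List.map_cons, List.prod_cons, List.length_cons]
    by_cases ha : a ∈ l
    · simpa using ι_mul_mul_prod_mem_pow_of_mem ha (prod_map_ι_mem_pow [])
    · have hl : ¬ l.Nodup := by simpa [ha] using hl
      obtain ⟨b, hb⟩ : ∃ b, List.Sublist [b, b] l := by simpa [List.nodup_iff_sublist] using hl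
      have hlen : 2 ≤ l.length := by simpa using hb.length_le
      rw [show l.length + 1 - 2 = 1 + (l.length - 2) by omega, pow_add, pow_one]
      exact Submodule.mul_mem_mul (LinearMap.mem_range_self _ _) (ih hl)

theorem pow_le_pow_add_two {e : V} (he : IsUnit (Q e)) (r : ℕ) :
    LinearMap.range (ι Q) ^ r ≤ LinearMap.range (ι Q) ^ (r + 2) := by
  have hone : (1 : Submodule R (CliffordAlgebra Q)) ≤ LinearMap.range (ι Q) ^ 2 := by
    rw [Submodule.one_le, pow_two]
    have := Submodule.smul_mem _ (↑he.unit⁻¹ : R) (Submodule.mul_mem_mul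
      (LinearMap.mem_range_self (ι Q) e) (LinearMap.mem_range_self (ι Q) e))
    rwa [ι_sq_scalar, Algebra.smul_def, ← map_mul, IsUnit.val_inv_mul, map_one] at this
  calc LinearMap.range (ι Q) ^ r = 1 * LinearMap.range (ι Q) ^ r := (one_mul _).symm
    _ ≤ LinearMap.range (ι Q) ^ 2 * LinearMap.range (ι Q) ^ r := mul_le_mul_left hone _
    _ = LinearMap.range (ι Q) ^ (r + 2) := by rw [← pow_add, add_comm]

theorem pow_le_pow_add_two_mul {e : V} (he : IsUnit (Q e)) (r k : ℕ) :
    LinearMap.range (ι Q) ^ r ≤ LinearMap.range (ι Q) ^ (r + 2 * k) := by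
  induction k with
  | zero => rfl
  | succ k ih => exact ih.trans (pow_le_pow_add_two he _)

end CommRing

section Field

variable {K V : Type*} [Field K] [AddCommGroup V] [Module K V] {Q : QuadraticForm K V}

def prodModPowSubTwo (Q : QuadraticForm K V) (r : ℕ) :
    V [⋀^Fin r]→ₗ[K] (CliffordAlgebra Q ⧸ LinearMap.range (ι Q) ^ (r - 2)) where
  toMultilinearMap := (LinearMap.range (ι Q) ^ (r - 2)).mkQ.compMultilinearMap
    ((MultilinearMap.mkPiAlgebraFin K r _).compLinearMap fun _ => ι Q)
  map_eq_zero_of_eq' x i j hij hne := by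
    have hx : ¬ (List.ofFn x).Nodup := fun h => hne (List.nodup_ofFn.1 h hij)
    simpa [Submodule.Quotient.mk_eq_zero, List.map_ofFn, Function.comp_def] using
      prod_map_ι_mem_pow_of_not_nodup (Q := Q) hx

variable [FiniteDimensional K V]

theorem pow_le_pow_sub_two_of_finrank_lt {r : ℕ} (hr : Module.finrank K V < r) :
    LinearMap.range (ι Q) ^ r ≤ LinearMap.range (ι Q) ^ (r - 2) := by
  rw [← span_range_prod_ofFn_ι, Submodule.span_le]
  rintro _ ⟨x, rfl⟩
  have hx : ¬ LinearIndependent K x := fun h => by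
    simpa using (h.fintype_card_le_finrank.trans_lt hr).ne
  simpa [prodModPowSubTwo, Submodule.Quotient.mk_eq_zero] using
    (prodModPowSubTwo Q r).map_linearDependent x hx

theorem pow_le_pow_finrank_sub_one_sup {e : V} (he : Q e ≠ 0) (r : ℕ) :
    LinearMap.range (ι Q) ^ r ≤
      LinearMap.range (ι Q) ^ (Module.finrank K V - 1) ⊔
        LinearMap.range (ι Q) ^ Module.finrank K V := by
  set n := Module.finrank K V
  induction r using Nat.strong_induction_on with
  | _ r ih =>
    rcases le_or_gt r n with hrn | hnr
    · obtain ⟨k, hk⟩ | ⟨k, hk⟩ := Nat.even_or_odd (n - r)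
      · have hle := pow_le_pow_add_two_mul (Q := Q) (Ne.isUnit he) r k
        exact hle.trans (le_of_eq_of_le (by congr 1; omega) le_sup_right)
      · have hle := pow_le_pow_add_two_mul (Q := Q) (Ne.isUnit he) r k
        exact hle.trans (le_of_eq_of_le (by congr 1; omega) le_sup_left)
    · exact (pow_le_pow_sub_two_of_finrank_lt hnr).trans (ih _ (by omega))

theorem pow_finrank_sub_one_sup_pow_finrank_eq_top {e : V} (he : Q e ≠ 0) :
    LinearMap.range (ι Q) ^ (Module.finrank K V - 1) ⊔
      LinearMap.range (ι Q) ^ Module.finrank K V = ⊤ := by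
  rw [eq_top_iff, ← iSup_ι_range_eq_top, iSup_le_iff]
  exact pow_le_pow_finrank_sub_one_sup he

end Field
end CliffordAlgebra

/-- Let `V` be a finite-dimensional real vector space of dimension `n ≥ 1` with
an anisotropic quadratic form `Q`, let `Δ` be a simple module over the Clifford algebra of `Q`
(its only Clifford submodules are `⊥` and `⊤`), and let `ψ ∈ Δ` be nonzero. Then `Δ` is spanned,
as a real vector space, by the elements `(ι x₁ ⋯ ι x_r) • ψ` with `r ∈ {n - 1, n}`. -/
theorem spinor_module_spanned_by_top_degree_products
    (V : Type*) [AddCommGroup V] [Module ℝ V] [FiniteDimensional ℝ V]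
    (n : ℕ) (hn : Module.finrank ℝ V = n) (hn1 : 1 ≤ n)
    (Q : QuadraticForm ℝ V) (hQ : ∀ x : V, Q x = 0 → x = 0)
    (Δ : Type*) [AddCommGroup Δ] [Module ℝ Δ]
    [Module (CliffordAlgebra Q) Δ] [IsScalarTower ℝ (CliffordAlgebra Q) Δ]
    (hsimple : ∀ N : Submodule (CliffordAlgebra Q) Δ, N = ⊥ ∨ N = ⊤)
    (ψ : Δ) (hψ : ψ ≠ 0) :
    Submodule.span ℝ
      {v : Δ | ∃ r : ℕ, (r = n - 1 ∨ r = n) ∧ ∃ x : Fin r → V,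
        v = (List.ofFn fun i => ι Q (x i)).prod • ψ} = ⊤ := by
  subst hn
  obtain ⟨e, he⟩ : ∃ e : V, Q e ≠ 0 := by
    obtain ⟨e, he⟩ := Module.finrank_pos_iff_exists_ne_zero.1 hn1
    exact ⟨e, fun h => he (hQ e h)⟩
  have hcyclic : Submodule.span (CliffordAlgebra Q) {ψ} = ⊤ :=
    (hsimple _).resolve_left (by simpa using hψ)
  let act : CliffordAlgebra Q →ₗ[ℝ] Δ :=
    (LinearMap.toSpanSingleton (CliffordAlgebra Q) Δ ψ).restrictScalars ℝ
  have hact : Submodule.map act ⊤ = ⊤ := by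
    rw [Submodule.map_top, LinearMap.range_restrictScalars, ← LinearMap.span_singleton_eq_range,
      hcyclic, Submodule.restrictScalars_top]
  rw [eq_top_iff, ← hact, ← pow_finrank_sub_one_sup_pow_finrank_eq_top he, Submodule.map_sup,
    ← span_range_prod_ofFn_ι, ← span_range_prod_ofFn_ι, Submodule.map_span, Submodule.map_span,
    sup_le_iff, Submodule.span_le, Submodule.span_le]
  constructor <;> rintro _ ⟨_, ⟨x, rfl⟩, rfl⟩
  · exact Submodule.subset_span ⟨_, Or.inl rfl, x, rfl⟩
  · exact Submodule.subset_span ⟨_, Or.inr rfl, x, rfl⟩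
end

section
/- Let (V,⟪·,·⟫) be a finite-dimensional real inner product space, let Cl(V) be the Clifford algebra of the quadratic form Q(x) = −⟪x,x⟫ with structure map ι, and let Δ be a finite-dimensional real inner product space that is a module over Cl(V) such that Clifford multiplication by vectors is skew-adjoint: ⟨ι(x) • v, w⟩ = −⟨v, ι(x) • w⟩ for all x ∈ V and v, w ∈ Δ. Assume dim Δ = dim V + 1 and let ψ ∈ Δ be nonzero. Then for every φ ∈ Δ with ⟨φ, ψ⟩ = 0 there exists a unique x ∈ V with φ = ι(x) • ψ; that is, the orthogonal complement of ψ equals {ι(x) • ψ : x ∈ V}. -/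
/-!
Skew-adjointness gives `⟪ι x • ψ, ψ⟫ = 0`, so `x ↦ ι x • ψ` maps `V` linearly into `ψᗮ`.
It is injective because `ι x • ι x • ψ = -‖x‖² • ψ`. Since `dim ψᗮ = dim Δ - 1 = dim V`,
an injective linear map `V → ψᗮ` is onto.
-/

open CliffordAlgebra RealInnerProductSpace

theorem QuadraticForm.anisotropic_of_eq_neg_inner {V : Type*} [NormedAddCommGroup V]
    [InnerProductSpace ℝ V] {Q : QuadraticForm ℝ V} (hQ : ∀ x : V, Q x = -⟪x, x⟫) :
    Q.Anisotropic := fun x hx => by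
  rwa [hQ, neg_eq_zero, inner_self_eq_zero] at hx

namespace CliffordAlgebra

variable {V : Type*} [AddCommGroup V] [Module ℝ V] {Q : QuadraticForm ℝ V}

section Module

variable {M : Type*} [AddCommGroup M] [Module ℝ M] [Module (CliffordAlgebra Q) M]
  [IsScalarTower ℝ (CliffordAlgebra Q) M]

theorem ι_smul_ι_smul (x : V) (v : M) : ι Q x • ι Q x • v = Q x • v := by
  rw [smul_smul, ι_sq_scalar, algebraMap_smul]

theorem ι_smul_eq_zero_iff (hQ : Q.Anisotropic) {v : M} (hv : v ≠ 0) (x : V) :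
    ι Q x • v = 0 ↔ x = 0 := by
  refine ⟨fun hx => hQ x ?_, fun hx => by rw [hx, map_zero, zero_smul]⟩
  have hsq : Q x • v = 0 := by rw [← ι_smul_ι_smul, hx, smul_zero]
  exact (smul_eq_zero.mp hsq).resolve_right hv

variable (Q) in
def smulι (v : M) : V →ₗ[ℝ] M :=
  (LinearMap.toSpanSingleton (CliffordAlgebra Q) M v).restrictScalars ℝ ∘ₗ ι Q

@[simp]
theorem smulι_apply (v : M) (x : V) : smulι Q v x = ι Q x • v := rfl

theorem smulι_injective (hQ : Q.Anisotropic) {v : M} (hv : v ≠ 0) :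
    Function.Injective (smulι Q v) := by
  rw [← LinearMap.ker_eq_bot, LinearMap.ker_eq_bot']
  intro x hx
  exact (ι_smul_eq_zero_iff hQ hv x).mp hx

end Module

section InnerProduct

variable {Δ : Type*} [NormedAddCommGroup Δ] [InnerProductSpace ℝ Δ] [Module (CliffordAlgebra Q) Δ]

theorem inner_ι_smul_self (hskew : ∀ (x : V) (v w : Δ), ⟪ι Q x • v, w⟫ = -⟪v, ι Q x • w⟫)
    (x : V) (v : Δ) : ⟪ι Q x • v, v⟫ = 0 := by
  linarith [hskew x v v, real_inner_comm v (ι Q x • v)]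

variable [IsScalarTower ℝ (CliffordAlgebra Q) Δ]

theorem range_smulι_le_orthogonal
    (hskew : ∀ (x : V) (v w : Δ), ⟪ι Q x • v, w⟫ = -⟪v, ι Q x • w⟫) (ψ : Δ) :
    LinearMap.range (smulι Q ψ) ≤ (ℝ ∙ ψ)ᗮ := by
  rintro _ ⟨x, rfl⟩
  exact Submodule.mem_orthogonal_singleton_iff_inner_left.mpr (inner_ι_smul_self hskew x ψ)

theorem range_smulι_eq_orthogonal [FiniteDimensional ℝ Δ] (hQ : Q.Anisotropic)
    (hskew : ∀ (x : V) (v w : Δ), ⟪ι Q x • v, w⟫ = -⟪v, ι Q x • w⟫)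
    (hdim : Module.finrank ℝ Δ = Module.finrank ℝ V + 1) {ψ : Δ} (hψ : ψ ≠ 0) :
    LinearMap.range (smulι Q ψ) = (ℝ ∙ ψ)ᗮ := by
  have : Fact (Module.finrank ℝ Δ = Module.finrank ℝ V + 1) := ⟨hdim⟩
  refine Submodule.eq_of_le_of_finrank_eq (range_smulι_le_orthogonal hskew ψ) ?_
  rw [LinearMap.finrank_range_of_inj (smulι_injective hQ hψ),
    Submodule.finrank_orthogonal_span_singleton (n := Module.finrank ℝ V) hψ]

end InnerProduct

end CliffordAlgebra

theorem orthogonal_complement_eq_clifford_orbit_general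
    (V : Type*) [NormedAddCommGroup V] [InnerProductSpace ℝ V]
    (Q : QuadraticForm ℝ V) (hQ : ∀ x : V, Q x = -⟪x, x⟫)
    (Δ : Type*) [NormedAddCommGroup Δ] [InnerProductSpace ℝ Δ] [FiniteDimensional ℝ Δ]
    [Module (CliffordAlgebra Q) Δ] [IsScalarTower ℝ (CliffordAlgebra Q) Δ]
    (hskew : ∀ (x : V) (v w : Δ), ⟪ι Q x • v, w⟫ = -⟪v, ι Q x • w⟫)
    (hdim : Module.finrank ℝ Δ = Module.finrank ℝ V + 1)
    (ψ : Δ) (hψ : ψ ≠ 0) :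
    (∀ φ : Δ, ⟪φ, ψ⟫ = 0 → ∃! x : V, φ = ι Q x • ψ) ∧
    {φ : Δ | ⟪φ, ψ⟫ = 0} = {φ : Δ | ∃ x : V, φ = ι Q x • ψ} := by
  have hQ' := QuadraticForm.anisotropic_of_eq_neg_inner hQ
  have hrange := range_smulι_eq_orthogonal hQ' hskew hdim hψ
  have mem_orbit_iff (φ : Δ) : (∃ x : V, φ = ι Q x • ψ) ↔ ⟪φ, ψ⟫ = 0 := by
    rw [← Submodule.mem_orthogonal_singleton_iff_inner_left, ← hrange, LinearMap.mem_range]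
    simp only [smulι_apply, eq_comm]
  refine ⟨fun φ hφ => ?_, Set.ext fun φ => (mem_orbit_iff φ).symm⟩
  obtain ⟨x, hx⟩ := (mem_orbit_iff φ).mpr hφ
  exact ⟨x, hx, fun y hy => smulι_injective hQ' hψ (by simp only [smulι_apply, ← hx, ← hy])⟩

/-- Let `V` be a finite-dimensional real inner product space, `Cl(V)` the
Clifford algebra of `Q x = -⟪x, x⟫`, and `Δ` a finite-dimensional real inner product space that
is a `Cl(V)`-module on which Clifford multiplication by vectors is skew-adjoint. If
`dim Δ = dim V + 1` and `ψ ≠ 0`, then every `φ` orthogonal to `ψ` is `ι x • ψ` for a unique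
`x ∈ V`; that is, the orthogonal complement of `ψ` equals `{ι x • ψ : x ∈ V}`. -/
theorem orthogonal_complement_eq_clifford_orbit
    (V : Type*) [NormedAddCommGroup V] [InnerProductSpace ℝ V] [FiniteDimensional ℝ V]
    (Q : QuadraticForm ℝ V) (hQ : ∀ x : V, Q x = -⟪x, x⟫)
    (Δ : Type*) [NormedAddCommGroup Δ] [InnerProductSpace ℝ Δ] [FiniteDimensional ℝ Δ]
    [Module (CliffordAlgebra Q) Δ] [IsScalarTower ℝ (CliffordAlgebra Q) Δ]
    (hskew : ∀ (x : V) (v w : Δ), ⟪ι Q x • v, w⟫ = -⟪v, ι Q x • w⟫)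
    (hdim : Module.finrank ℝ Δ = Module.finrank ℝ V + 1)
    (ψ : Δ) (hψ : ψ ≠ 0) :
    (∀ φ : Δ, ⟪φ, ψ⟫ = 0 → ∃! x : V, φ = ι Q x • ψ) ∧
    {φ : Δ | ⟪φ, ψ⟫ = 0} = {φ : Δ | ∃ x : V, φ = ι Q x • ψ} :=
  orthogonal_complement_eq_clifford_orbit_general V Q hQ Δ hskew hdim ψ hψ
end

section
/- Let V be a finite-dimensional real inner product space, let ξ ∈ V be a unit vector, and let h be a symmetric bilinear form on V. Then h(w, w′) = 0 for all w, w′ ∈ V orthogonal to ξ if and only if there exists a vector v ∈ V with h = 2 ξ ⊙ v, where (ξ ⊙ v)(x,y) = (1/2)(⟪ξ,x⟫⟪v,y⟫ + ⟪v,x⟫⟪ξ,y⟫); moreover such a v is unique. -/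
/-! Write `x = (x - ⟪ξ, x⟫ ξ) + ⟪ξ, x⟫ ξ`. If `h` kills `ξ^⊥ × ξ^⊥`, expanding `h x y` leaves
`⟪ξ, y⟫ h(x, ξ) + ⟪ξ, x⟫ h(ξ, y) - ⟪ξ, x⟫ ⟪ξ, y⟫ h(ξ, ξ)`, which is `2 ξ ⊙ v` for `v` the Riesz
representative of `h(ξ, ·) - ½ h(ξ, ξ) ⟪ξ, ·⟫`. Conversely `2 ξ ⊙ v` visibly vanishes on `ξ^⊥`,
and testing it against `(ξ, ξ)` and then `(ξ, y)` recovers `⟪v, ξ⟫` and then `⟪v, y⟫`, whence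
uniqueness. -/

open RealInnerProductSpace

section SymmetricProduct

variable {V : Type*} [NormedAddCommGroup V] [InnerProductSpace ℝ V] {ξ : V}

lemma inner_sub_inner_smul_self_eq_zero (hξ : ⟪ξ, ξ⟫ = 1) (x : V) :
    ⟪ξ, x - ⟪ξ, x⟫ • ξ⟫ = 0 := by
  rw [inner_sub_right, real_inner_smul_right, hξ, mul_one, sub_self]

lemma LinearMap.apply_eq_of_vanishes_on_orthogonal (h : V →ₗ[ℝ] V →ₗ[ℝ] ℝ) (hξ : ⟪ξ, ξ⟫ = 1)
    (hvan : ∀ w w' : V, ⟪ξ, w⟫ = 0 → ⟪ξ, w'⟫ = 0 → h w w' = 0) (x y : V) :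
    h x y = ⟪ξ, y⟫ * h x ξ + ⟪ξ, x⟫ * h ξ y - ⟪ξ, x⟫ * ⟪ξ, y⟫ * h ξ ξ := by
  have hperp := hvan _ _ (inner_sub_inner_smul_self_eq_zero hξ x)
    (inner_sub_inner_smul_self_eq_zero hξ y)
  simp only [map_sub, map_smul, LinearMap.sub_apply, LinearMap.smul_apply, smul_eq_mul] at hperp
  linarith

lemma LinearMap.exists_eq_sym_product_of_vanishes_on_orthogonal [FiniteDimensional ℝ V]
    (h : V →ₗ[ℝ] V →ₗ[ℝ] ℝ) (hsymm : ∀ x y : V, h x y = h y x) (hξ : ⟪ξ, ξ⟫ = 1)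
    (hvan : ∀ w w' : V, ⟪ξ, w⟫ = 0 → ⟪ξ, w'⟫ = 0 → h w w' = 0) :
    ∃ v : V, ∀ x y : V, h x y = ⟪ξ, x⟫ * ⟪v, y⟫ + ⟪v, x⟫ * ⟪ξ, y⟫ := by
  obtain ⟨u, hu⟩ : ∃ u : V, ∀ y, ⟪u, y⟫ = h ξ y :=
    ⟨(InnerProductSpace.toDual ℝ V).symm (h ξ).toContinuousLinearMap, fun y => by simp⟩
  refine ⟨u - (h ξ ξ / 2) • ξ, fun x y => ?_⟩
  simp only [inner_sub_left, real_inner_smul_left, hu]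
  rw [h.apply_eq_of_vanishes_on_orthogonal hξ hvan, hsymm x ξ, real_inner_comm x ξ]
  ring

lemma eq_of_forall_inner_sym_product_eq (hξ : ξ ≠ 0) {v v' : V}
    (H : ∀ x y : V, ⟪ξ, x⟫ * ⟪v, y⟫ + ⟪v, x⟫ * ⟪ξ, y⟫ = ⟪ξ, x⟫ * ⟪v', y⟫ + ⟪v', x⟫ * ⟪ξ, y⟫) :
    v = v' := by
  have hξξ : ⟪ξ, ξ⟫ ≠ 0 := inner_self_ne_zero.mpr hξ
  have hξ_comp : ⟪v, ξ⟫ = ⟪v', ξ⟫ := mul_left_cancel₀ hξξ (by linarith [H ξ ξ])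
  refine ext_inner_right ℝ fun y => mul_left_cancel₀ hξξ ?_
  have hξy := H ξ y
  rw [hξ_comp] at hξy
  linarith

end SymmetricProduct

/-- Let `V` be a finite-dimensional real inner product space, `ξ` a unit
vector, and `h` a symmetric bilinear form on `V`. Then `h` vanishes on the orthogonal complement
of `ξ` if and only if `h = 2 ξ ⊙ v` for a (unique) vector `v`, where
`(ξ ⊙ v)(x, y) = (1/2) * (⟪ξ, x⟫ * ⟪v, y⟫ + ⟪v, x⟫ * ⟪ξ, y⟫)`. -/
theorem symmetric_form_vanishing_on_complement_iff_sym_product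
    (V : Type*) [NormedAddCommGroup V] [InnerProductSpace ℝ V] [FiniteDimensional ℝ V]
    (ξ : V) (hξ : ‖ξ‖ = 1)
    (h : V →ₗ[ℝ] V →ₗ[ℝ] ℝ) (hsymm : ∀ x y : V, h x y = h y x) :
    (∀ w w' : V, ⟪ξ, w⟫ = 0 → ⟪ξ, w'⟫ = 0 → h w w' = 0) ↔
    (∃! v : V, ∀ x y : V,
      h x y = 2 * ((1 / 2) * (⟪ξ, x⟫ * ⟪v, y⟫ + ⟪v, x⟫ * ⟪ξ, y⟫))) := by
  have hξξ : ⟪ξ, ξ⟫ = 1 := by rw [real_inner_self_eq_norm_sq, hξ, one_pow]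
  have hξ0 : ξ ≠ 0 := norm_ne_zero_iff.mp (by rw [hξ]; exact one_ne_zero)
  simp only [show ∀ a : ℝ, 2 * ((1 / 2) * a) = a by intro a; ring]
  constructor
  · intro hvan
    obtain ⟨v, hv⟩ := h.exists_eq_sym_product_of_vanishes_on_orthogonal hsymm hξξ hvan
    exact ⟨v, hv, fun v' hv' => eq_of_forall_inner_sym_product_eq hξ0 fun x y => by
      rw [← hv, ← hv']⟩
  · rintro ⟨v, hv, -⟩ w w' hw hw'
    rw [hv, hw, hw', zero_mul, mul_zero, add_zero]
end
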